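/- arXiv:2407.18853 — 7 statements merged into one kernel-verified Lean document; each statement's English description precedes it below -/
import Mathlib

section
/- Let X be a complete metric space equipped with a closed partial order ≤ (i.e., {(x,y) : x ≤ y} is closed in X × X), let Φ be a semiflow on X, and let A ⊆ X be a compact set. (i) If x ∈ X is such that the positive orbit {Φ_t(x) : t ≥ 0} is contained in A and is increasing (Φ_s(x) ≤ Φ_t(x) whenever 0 ≤ s ≤ t) or decreasing (Φ_s(x) ≥ Φ_t(x) whenever 0 ≤ s ≤ t), then Φ_t(x) converges as t → ∞ to an equilibrium of Φ. (ii) If (x_s)_{s ≤ 0} is a negative orbit contained in A (i.e., x_s ∈ A and Φ_t(x_s) = x_{t+s} for all 0 ≤ t ≤ −s) which is increasing (x_{s₁} ≤ x_{s₂} whenever s₁ ≤ s₂ ≤ 0) or decreasing, then x_s converges as s → −∞ to an equilibrium of Φ. -/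
open Filter Topology

/-- Helper: a function `f : ℝ → X` that eventually lies in a compact set and is eventually
monotone with respect to a closed antisymmetric relation converges along `atTop`. -/
lemma aux_tendsto_of_monotone_compact {X : Type*} [TopologicalSpace X]
    {r : X → X → Prop} (hr : IsClosed {p : X × X | r p.1 p.2})
    (hanti : ∀ a b, r a b → r b a → a = b)
    {A : Set X} (hA : IsCompact A) (f : ℝ → X)
    (hf : ∀ᶠ s in atTop, f s ∈ A)
    (hmono : ∀ᶠ s in atTop, ∀ t, s ≤ t → r (f s) (f t)) :
    ∃ e : X, Tendsto f atTop (𝓝 e) := by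
  have hle : map f atTop ≤ 𝓟 A := le_principal_iff.2 (mem_map.2 hf)
  obtain ⟨e, heA, he⟩ := hA.exists_clusterPt hle
  -- every cluster point q satisfies `r (f s) q` eventually
  have key : ∀ q : X, ClusterPt q (map f atTop) → ∀ᶠ s in atTop, r (f s) q := by
    intro q hq
    filter_upwards [hmono] with s hs
    have hS : IsClosed {y : X | r (f s) y} := by
      have : {y : X | r (f s) y} = (fun y => (f s, y)) ⁻¹' {p : X × X | r p.1 p.2} := rfl
      rw [this]
      exact hr.preimage (Continuous.prodMk_right _)
    have hmem : {y : X | r (f s) y} ∈ map f atTop := by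
      rw [mem_map]
      filter_upwards [eventually_ge_atTop s] with t ht
      exact hs t ht
    have : ClusterPt q (𝓟 {y : X | r (f s) y}) := hq.mono (le_principal_iff.2 hmem)
    exact hS.closure_subset (mem_closure_iff_clusterPt.2 this)
  -- hence all cluster points coincide
  have huniq : ∀ p : X, ClusterPt p (map f atTop) → p = e := by
    intro p hp
    have h1 : ∀ᶠ s in atTop, r (f s) e := key e he
    have h2 : ∀ᶠ s in atTop, r (f s) p := key p hp
    have hc : ∀ q : X, (∀ᶠ s in atTop, r (f s) q) → ∀ p' : X,
        ClusterPt p' (map f atTop) → r p' q := by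
      intro q hq p' hp'
      have hS : IsClosed {y : X | r y q} := by
        have : {y : X | r y q} = (fun y => (y, q)) ⁻¹' {p : X × X | r p.1 p.2} := rfl
        rw [this]
        exact hr.preimage (continuous_id.prodMk continuous_const)
      have hmem : {y : X | r y q} ∈ map f atTop := mem_map.2 hq
      have : ClusterPt p' (𝓟 {y : X | r y q}) := hp'.mono (le_principal_iff.2 hmem)
      exact hS.closure_subset (mem_closure_iff_clusterPt.2 this)
    exact hanti p e (hc e h1 p hp) (hc p h2 e he)
  exact ⟨e, hA.tendsto_nhds_of_unique_mapClusterPt hf fun p _ hp => huniq p hp⟩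

/-- On a complete metric space with a closed partial order, an increasing or decreasing
positive orbit of a semiflow contained in a compact set converges to an equilibrium as
`t → ∞`; and an increasing or decreasing negative orbit contained in a compact set
converges to an equilibrium as `s → -∞`. -/
theorem monotone_orbit_in_compact_converges_to_equilibrium
    {X : Type*} [MetricSpace X] [CompleteSpace X] [PartialOrder X]
    (h_order_closed : IsClosed {p : X × X | p.1 ≤ p.2})
    -- `Φ` is a semiflow on `X`:
    (Φ : ℝ → X → X)
    (hΦ_cont : ContinuousOn (fun a : ℝ × X => Φ a.1 a.2) (Set.Ici 0 ×ˢ Set.univ))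
    (hΦ_zero : ∀ x, Φ 0 x = x)
    (hΦ_add : ∀ t s, 0 ≤ t → 0 ≤ s → ∀ x, Φ t (Φ s x) = Φ (t + s) x)
    -- `A` is a compact subset of `X`:
    (A : Set X) (hA : IsCompact A) :
    -- (i) monotone positive orbits in `A` converge to an equilibrium:
    (∀ x : X, (∀ t, 0 ≤ t → Φ t x ∈ A) →
      ((∀ s t, 0 ≤ s → s ≤ t → Φ s x ≤ Φ t x) ∨ (∀ s t, 0 ≤ s → s ≤ t → Φ t x ≤ Φ s x)) →
      ∃ e : X, (∀ t, 0 ≤ t → Φ t e = e) ∧ Tendsto (fun t => Φ t x) atTop (𝓝 e)) ∧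
    -- (ii) monotone negative orbits in `A` converge to an equilibrium:
    (∀ x : ℝ → X, (∀ s, s ≤ 0 → x s ∈ A) →
      (∀ t s, 0 ≤ t → s ≤ 0 → t ≤ -s → Φ t (x s) = x (t + s)) →
      ((∀ s₁ s₂, s₁ ≤ s₂ → s₂ ≤ 0 → x s₁ ≤ x s₂) ∨
       (∀ s₁ s₂, s₁ ≤ s₂ → s₂ ≤ 0 → x s₂ ≤ x s₁)) →
      ∃ e : X, (∀ t, 0 ≤ t → Φ t e = e) ∧ Tendsto x atBot (𝓝 e)) := by
  -- continuity of `Φ t` for `t ≥ 0`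
  have hcont : ∀ t : ℝ, 0 ≤ t → Continuous (fun y => Φ t y) := by
    intro t ht
    exact hΦ_cont.comp_continuous (continuous_const.prodMk continuous_id)
      fun y => ⟨ht, trivial⟩
  -- the dual order is also closed
  have h_dual_closed : IsClosed {p : X × X | p.2 ≤ p.1} := by
    have : {p : X × X | p.2 ≤ p.1} = Prod.swap ⁻¹' {p : X × X | p.1 ≤ p.2} := rfl
    rw [this]; exact h_order_closed.preimage continuous_swap
  constructor
  · -- (i)
    intro x horbit hmono
    have hf : ∀ᶠ s in atTop, Φ s x ∈ A := by
      filter_upwards [eventually_ge_atTop (0 : ℝ)] with s hs using horbit s hs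
    have hconv : ∃ e : X, Tendsto (fun t => Φ t x) atTop (𝓝 e) := by
      rcases hmono with hmono | hmono
      · exact aux_tendsto_of_monotone_compact h_order_closed (fun a b => le_antisymm)
          hA _ hf (by filter_upwards [eventually_ge_atTop (0 : ℝ)] with s hs t ht
                      using hmono s t hs ht)
      · exact aux_tendsto_of_monotone_compact h_dual_closed
          (fun a b hab hba => le_antisymm hba hab)
          hA _ hf (by filter_upwards [eventually_ge_atTop (0 : ℝ)] with s hs t ht
                      using hmono s t hs ht)
    obtain ⟨e, he⟩ := hconv
    refine ⟨e, fun t ht => ?_, he⟩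
    have h1 : Tendsto (fun s => Φ t (Φ s x)) atTop (𝓝 (Φ t e)) :=
      ((hcont t ht).tendsto e).comp he
    have h2 : Tendsto (fun s => Φ t (Φ s x)) atTop (𝓝 e) := by
      have heq : ∀ᶠ s in atTop, Φ t (Φ s x) = Φ (t + s) x := by
        filter_upwards [eventually_ge_atTop (0 : ℝ)] with s hs using hΦ_add t s ht hs x
      have h3 : Tendsto (fun s : ℝ => Φ (t + s) x) atTop (𝓝 e) :=
        he.comp (tendsto_atTop_add_const_left _ t tendsto_id)
      exact h3.congr' (heq.mono fun s h => h.symm)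
    exact tendsto_nhds_unique h1 h2
  · -- (ii)
    intro x hxA hxorb hmono
    set f : ℝ → X := fun s => x (-s) with hf_def
    have hf : ∀ᶠ s in atTop, f s ∈ A := by
      filter_upwards [eventually_ge_atTop (0 : ℝ)] with s hs
      exact hxA (-s) (by linarith)
    have hconv : ∃ e : X, Tendsto f atTop (𝓝 e) := by
      rcases hmono with hmono | hmono
      · exact aux_tendsto_of_monotone_compact h_dual_closed
          (fun a b hab hba => le_antisymm hba hab) hA _ hf
          (by filter_upwards [eventually_ge_atTop (0 : ℝ)] with s hs t ht
              exact hmono (-t) (-s) (by linarith) (by linarith))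
      · exact aux_tendsto_of_monotone_compact h_order_closed (fun a b => le_antisymm)
          hA _ hf
          (by filter_upwards [eventually_ge_atTop (0 : ℝ)] with s hs t ht
              exact hmono (-t) (-s) (by linarith) (by linarith))
    obtain ⟨e, he⟩ := hconv
    have hx_tendsto : Tendsto x atBot (𝓝 e) := by
      have := he.comp tendsto_neg_atBot_atTop
      have heq : (f ∘ Neg.neg) = x := by
        funext s; simp [f]
      rwa [heq] at this
    refine ⟨e, fun t ht => ?_, hx_tendsto⟩
    have h1 : Tendsto (fun s => Φ t (f s)) atTop (𝓝 (Φ t e)) :=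
      ((hcont t ht).tendsto e).comp he
    have h2 : Tendsto (fun s => Φ t (f s)) atTop (𝓝 e) := by
      have heq : ∀ᶠ s in atTop, Φ t (f s) = x (t + -s) := by
        filter_upwards [eventually_ge_atTop t, eventually_ge_atTop (0 : ℝ)] with s hs hs0
        exact hxorb t (-s) ht (by linarith) (by linarith)
      have h3 : Tendsto (fun s : ℝ => x (t + -s)) atTop (𝓝 e) :=
        hx_tendsto.comp (tendsto_atBot_add_const_left _ t tendsto_neg_atTop_atBot)
      exact h3.congr' (heq.mono fun s h => h.symm)
    exact tendsto_nhds_unique h1 h2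
end

section
/- Let S be a compact metric space with metric d, let Φ be a semiflow on S, and suppose that p, q ∈ S are equilibria of Φ and that Φ has no equilibrium in S other than p and q. Then for every ε > 0 there exists δ > 0 such that: whenever x ∈ S satisfies Φ_t(x) = x for some t ∈ (0, δ), it follows that d(x, p) < ε or d(x, q) < ε. -/
open Filter Topology

/-- If `x` is fixed by `Φ t` with `0 < t`, it is fixed by all natural multiples of `t`. -/
lemma fixed_nat_mul {S : Type*} (Φ : ℝ → S → S)
    (hΦ_add : ∀ t s, 0 ≤ t → 0 ≤ s → ∀ x, Φ t (Φ s x) = Φ (t + s) x)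
    {x : S} {t : ℝ} (ht : 0 < t) (hx : Φ t x = x) :
    ∀ k : ℕ, Φ (k * t) x = x := by
  intro k
  induction k with
  | zero =>
    have h := hΦ_add 0 t le_rfl ht.le x
    rw [hx, zero_add, hx] at h
    simpa using h
  | succ n ih =>
    have h := hΦ_add (n * t) t (by positivity) ht.le x
    rw [hx] at h
    have : ((n : ℝ) + 1) * t = n * t + t := by ring
    rw [Nat.cast_succ, this, ← h, ih]

/-- Claim 2 in the proof of the connecting orbit theorem: on a compact metric space, if a
semiflow `Φ` has exactly the two equilibria `p` and `q`, then for every `ε > 0` there is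
`δ > 0` such that any point fixed by `Φ_t` for some `t ∈ (0, δ)` lies within `ε` of `p`
or within `ε` of `q`. -/
theorem small_time_fixed_points_near_equilibria
    {S : Type*} [MetricSpace S] [CompactSpace S]
    -- `Φ` is a semiflow on `S`:
    (Φ : ℝ → S → S)
    (hΦ_cont : ContinuousOn (fun a : ℝ × S => Φ a.1 a.2) (Set.Ici 0 ×ˢ Set.univ))
    (hΦ_zero : ∀ x, Φ 0 x = x)
    (hΦ_add : ∀ t s, 0 ≤ t → 0 ≤ s → ∀ x, Φ t (Φ s x) = Φ (t + s) x)
    -- `p` and `q` are equilibria, and there are no other equilibria: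
    (p q : S)
    (hp : ∀ t, 0 ≤ t → Φ t p = p)
    (hq : ∀ t, 0 ≤ t → Φ t q = q)
    (h_only : ∀ x : S, (∀ t, 0 ≤ t → Φ t x = x) → x = p ∨ x = q) :
    ∀ ε > (0:ℝ), ∃ δ > (0:ℝ), ∀ (x : S) (t : ℝ), 0 < t → t < δ → Φ t x = x →
      dist x p < ε ∨ dist x q < ε := by
  intro ε hε
  by_contra hcon
  push_neg at hcon
  -- extract sequences
  have H : ∀ n : ℕ, ∃ x : S, ∃ t : ℝ, 0 < t ∧ t < 1 / (n + 1) ∧ Φ t x = x ∧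
      ε ≤ dist x p ∧ ε ≤ dist x q := by
    intro n
    obtain ⟨x, t, h1, h2, h3, h4, h5⟩ := hcon (1 / (n + 1)) (by positivity)
    exact ⟨x, t, h1, h2, h3, h4, h5⟩
  choose x t ht0 htlt hfix hdp hdq using H
  -- t n → 0
  have ht_lim : Tendsto t atTop (𝓝 0) := by
    apply squeeze_zero (fun n => (ht0 n).le) (fun n => (htlt n).le)
    exact tendsto_one_div_add_atTop_nhds_zero_nat
  -- compactness: convergent subsequence
  obtain ⟨y, -, φ, hφ, hxy⟩ := isCompact_univ.tendsto_subseq (fun n => Set.mem_univ (x n))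
  have htφ : Tendsto (t ∘ φ) atTop (𝓝 0) := ht_lim.comp hφ.tendsto_atTop
  -- y is an equilibrium
  have hy_eq : ∀ s, 0 ≤ s → Φ s y = y := by
    intro s hs
    rcases eq_or_lt_of_le hs with h | hs
    · rw [← h, hΦ_zero]
    -- remainder sequence
    set r : ℕ → ℝ := fun n => s - ⌊s / t (φ n)⌋ * t (φ n) with hr
    have hr_mem : ∀ n, 0 ≤ r n ∧ r n < t (φ n) := by
      intro n
      have ht' := ht0 (φ n)
      constructor
      · have h1 : (⌊s / t (φ n)⌋ : ℝ) * t (φ n) ≤ s :=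
          (le_div_iff₀ ht').mp (Int.floor_le (s / t (φ n)))
        simp only [hr]; linarith
      · have h2 : s < ((⌊s / t (φ n)⌋ : ℝ) + 1) * t (φ n) :=
          (div_lt_iff₀ ht').mp (Int.lt_floor_add_one (s / t (φ n)))
        simp only [hr]; nlinarith
    have hfloor_nonneg : ∀ n, 0 ≤ ⌊s / t (φ n)⌋ := fun n =>
      Int.floor_nonneg.mpr (div_nonneg hs.le (ht0 (φ n)).le)
    -- Φ s (x (φ n)) = Φ (r n) (x (φ n))
    have key : ∀ n, Φ s (x (φ n)) = Φ (r n) (x (φ n)) := by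
      intro n
      obtain ⟨k, hk⟩ := Int.eq_ofNat_of_zero_le (hfloor_nonneg n)
      have hfx : Φ ((k : ℝ) * t (φ n)) (x (φ n)) = x (φ n) :=
        fixed_nat_mul Φ hΦ_add (ht0 (φ n)) (hfix (φ n)) k
      have hadd := hΦ_add (r n) ((k : ℝ) * t (φ n)) (hr_mem n).1 (mul_nonneg (Nat.cast_nonneg k) (ht0 (φ n)).le) (x (φ n))
      rw [hfx] at hadd
      have hs_eq : r n + (k : ℝ) * t (φ n) = s := by
        simp only [hr]
        have : ((⌊s / t (φ n)⌋ : ℤ) : ℝ) = (k : ℝ) := by rw [hk]; push_cast; ring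
        rw [← this]; ring
      rw [hs_eq] at hadd
      exact hadd.symm
    -- r n → 0
    have hr_lim : Tendsto r atTop (𝓝 0) :=
      squeeze_zero (fun n => (hr_mem n).1) (fun n => (hr_mem n).2.le) htφ
    -- limits
    have hpair1 : Tendsto (fun n => ((s, x (φ n)) : ℝ × S)) atTop (𝓝[Set.Ici 0 ×ˢ Set.univ] (s, y)) := by
      rw [tendsto_nhdsWithin_iff]
      refine ⟨(tendsto_const_nhds.prodMk_nhds hxy), ?_⟩
      exact Eventually.of_forall fun n => ⟨Set.mem_Ici.mpr hs.le, Set.mem_univ _⟩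
    have hpair2 : Tendsto (fun n => ((r n, x (φ n)) : ℝ × S)) atTop (𝓝[Set.Ici 0 ×ˢ Set.univ] (0, y)) := by
      rw [tendsto_nhdsWithin_iff]
      refine ⟨(hr_lim.prodMk_nhds hxy), ?_⟩
      exact Eventually.of_forall fun n => ⟨(hr_mem n).1, trivial⟩
    have hL1 : Tendsto (fun n => Φ s (x (φ n))) atTop (𝓝 (Φ s y)) :=
      (hΦ_cont (s, y) ⟨Set.mem_Ici.mpr hs.le, Set.mem_univ _⟩).tendsto.comp hpair1
    have hL2 : Tendsto (fun n => Φ (r n) (x (φ n))) atTop (𝓝 (Φ 0 y)) :=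
      (hΦ_cont (0, y) ⟨Set.self_mem_Ici, Set.mem_univ _⟩).tendsto.comp hpair2
    have : Φ s y = Φ 0 y := by
      apply tendsto_nhds_unique hL1
      exact hL2.congr fun n => (key n).symm
    rw [this, hΦ_zero]
  -- contradiction: y = p or y = q but dist y p ≥ ε, dist y q ≥ ε
  have hdyp : ε ≤ dist y p := by
    have : Tendsto (fun n => dist (x (φ n)) p) atTop (𝓝 (dist y p)) :=
      hxy.dist tendsto_const_nhds
    exact le_of_tendsto_of_tendsto tendsto_const_nhds this
      (Eventually.of_forall fun n => hdp (φ n))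
  have hdyq : ε ≤ dist y q := by
    have : Tendsto (fun n => dist (x (φ n)) q) atTop (𝓝 (dist y q)) :=
      hxy.dist tendsto_const_nhds
    exact le_of_tendsto_of_tendsto tendsto_const_nhds this
      (Eventually.of_forall fun n => hdq (φ n))
  rcases h_only y hy_eq with h | h
  · rw [h] at hdyp; simp at hdyp; linarith
  · rw [h] at hdyq; simp at hdyq; linarith
end

section
/- Let d ≥ 1 and let (μ_n), (ν_n), μ, ν be Borel probability measures on ℝ^d such that μ_n → μ weakly, ν_n → ν weakly, and μ_n ≤_st ν_n for every n. Then μ ≤_st ν. In particular, the stochastic order is a closed partial order relation on the space of Borel probability measures on ℝ^d with the topology of weak convergence. -/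
/-!
Weak convergence passes `∫ g dμₙ ≤ ∫ g dνₙ` to the limit for continuous bounded increasing `g`.
For a closed upper set `F`, the thickened indicators of `F` are such functions and decrease to
`1_F`, so `μ F ≤ ν F`. Inner regularity extends this to all Borel upper sets `U`, since the upper
closure of a compact `K ⊆ U` is a closed upper set between `K` and `U`. Finally, by the layer cake
formula the integral of a bounded increasing `f` (shifted to be nonnegative) is an integral of the
measures of its superlevel sets `{f ≥ t}`, which are upper sets.
-/

open MeasureTheory Filter Topology

/-- The stochastic order on Borel probability measures on `ℝ^d`:
`μ ≤ₛₜ ν` iff `∫ f dμ ≤ ∫ f dν` for every bounded measurable increasing `f`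
(with respect to the coordinatewise partial order on `ℝ^d`). -/
def StochasticallyLE {d : ℕ} (μ ν : Measure (Fin d → ℝ)) : Prop :=
  ∀ f : (Fin d → ℝ) → ℝ, Measurable f → (∃ M : ℝ, ∀ x, |f x| ≤ M) → Monotone f →
    ∫ x, f x ∂μ ≤ ∫ x, f x ∂ν

section OrderedNormedGroup

variable {α : Type*} [SeminormedAddCommGroup α] [Preorder α] [IsOrderedAddMonoid α]
  {s : Set α}

theorem IsUpperSet.antitone_infEDist (hs : IsUpperSet s) :
    Antitone fun x => Metric.infEDist x s := by
  intro x y hxy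
  refine Metric.le_infEDist.2 fun z hz => ?_
  have hz' : z + (y - x) ∈ s := hs (le_add_of_nonneg_right (sub_nonneg.2 hxy)) hz
  calc Metric.infEDist y s ≤ edist y (z + (y - x)) := Metric.infEDist_le_edist_of_mem hz'
    _ = edist x z := by
      rw [← edist_add_right x z (y - x), add_sub_cancel]

theorem IsUpperSet.monotone_thickenedIndicator (hs : IsUpperSet s) {δ : ℝ} (hδ : 0 < δ) :
    Monotone (thickenedIndicator hδ s) := by
  intro x y hxy
  refine (ENNReal.toNNReal_le_toNNReal thickenedIndicatorAux_lt_top.ne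
    thickenedIndicatorAux_lt_top.ne).2 ?_
  exact tsub_le_tsub_left (ENNReal.div_le_div_right (hs.antitone_infEDist hxy) _) 1

variable [MeasurableSpace α] [OpensMeasurableSpace α] {μ ν : Measure α} [IsFiniteMeasure μ]
  [IsFiniteMeasure ν]

theorem measure_le_of_forall_continuous_monotone
    (h : ∀ g : α → ℝ, Continuous g → (∃ M : ℝ, ∀ x, |g x| ≤ M) → Monotone g →
      ∫ x, g x ∂μ ≤ ∫ x, g x ∂ν)
    {F : Set α} (hF : IsClosed F) (hFu : IsUpperSet F) : μ F ≤ ν F := by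
  have hδ : ∀ n : ℕ, (0 : ℝ) < 1 / (n + 1) := fun n => Nat.one_div_pos_of_nat
  have hδ_lim : Tendsto (fun n : ℕ => (1 : ℝ) / (n + 1)) atTop (𝓝 0) :=
    tendsto_one_div_add_atTop_nhds_zero_nat
  have hreal : μ.real F ≤ ν.real F :=
    le_of_tendsto_of_tendsto' (tendsto_integral_thickenedIndicator_of_isClosed μ hF hδ hδ_lim)
      (tendsto_integral_thickenedIndicator_of_isClosed ν hF hδ hδ_lim) fun n =>
      h _ (NNReal.continuous_coe.comp (thickenedIndicator (hδ n) F).continuous)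
        ⟨1, fun x => by simpa using thickenedIndicator_le_one (hδ n) F x⟩
        fun x y hxy => NNReal.coe_le_coe.2 (hFu.monotone_thickenedIndicator (hδ n) hxy)
  exact (ENNReal.toReal_le_toReal (measure_ne_top μ F) (measure_ne_top ν F)).1 hreal

end OrderedNormedGroup

theorem measure_le_of_forall_isClosed_isUpperSet {ι : Type*} [Fintype ι]
    {μ ν : Measure (ι → ℝ)} [IsFiniteMeasure μ]
    (h : ∀ F : Set (ι → ℝ), IsClosed F → IsUpperSet F → μ F ≤ ν F)
    {U : Set (ι → ℝ)} (hU : MeasurableSet U) (hUu : IsUpperSet U) : μ U ≤ ν U := by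
  refine ENNReal.le_of_forall_pos_le_add fun ε hε _ => ?_
  obtain ⟨K, hKU, hK, hμK⟩ := hU.exists_isCompact_lt_add (measure_ne_top μ U)
    (ENNReal.coe_ne_zero.2 hε.ne')
  have hKc : IsClosed (upperClosure K : Set (ι → ℝ)) :=
    hK.isClosed.upperClosure_pi hK.isBounded.bddBelow
  calc μ U ≤ μ K + ε := hμK.le
    _ ≤ μ (upperClosure K) + ε := by gcongr; exact subset_upperClosure
    _ ≤ ν (upperClosure K) + ε := by gcongr ?_ + _; exact h _ hKc (upperClosure K).upper
    _ ≤ ν U + ε := by gcongr; exact upperClosure_min hKU hUu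

section LayerCake

variable {α : Type*} [MeasurableSpace α] [Preorder α] {μ ν : Measure α}

theorem lintegral_ofReal_le_of_forall_isUpperSet
    (h : ∀ U : Set α, MeasurableSet U → IsUpperSet U → μ U ≤ ν U)
    {f : α → ℝ} (hf : Measurable f) (hf0 : 0 ≤ f) (hmono : Monotone f) :
    ∫⁻ x, ENNReal.ofReal (f x) ∂μ ≤ ∫⁻ x, ENNReal.ofReal (f x) ∂ν := by
  rw [lintegral_eq_lintegral_meas_le μ (ae_of_all _ hf0) hf.aemeasurable,
    lintegral_eq_lintegral_meas_le ν (ae_of_all _ hf0) hf.aemeasurable]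
  exact lintegral_mono fun t =>
    h _ (measurableSet_le measurable_const hf) fun x y hxy hx => hx.trans (hmono hxy)

theorem integral_le_of_forall_isUpperSet [IsProbabilityMeasure μ] [IsProbabilityMeasure ν]
    (h : ∀ U : Set α, MeasurableSet U → IsUpperSet U → μ U ≤ ν U)
    {f : α → ℝ} (hf : Measurable f) (hbdd : ∃ M : ℝ, ∀ x, |f x| ≤ M) (hmono : Monotone f) :
    ∫ x, f x ∂μ ≤ ∫ x, f x ∂ν := by
  obtain ⟨M, hM⟩ := hbdd
  have hf0 : 0 ≤ fun x => f x + M := fun x => neg_le_iff_add_nonneg.1 (abs_le.1 (hM x)).1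
  have hf_int : ∀ ρ : Measure α, [IsFiniteMeasure ρ] → Integrable f ρ := fun ρ _ =>
    .of_bound hf.aestronglyMeasurable M (ae_of_all _ hM)
  have hg_int : ∀ ρ : Measure α, [IsFiniteMeasure ρ] → Integrable (fun x => f x + M) ρ :=
    fun ρ _ => (hf_int ρ).add (integrable_const M)
  have hshift : ∀ ρ : Measure α, [IsProbabilityMeasure ρ] →
      ∫ x, f x + M ∂ρ = ∫ x, f x ∂ρ + M := fun ρ _ => by
    simp [integral_add (hf_int ρ) (integrable_const M)]
  have hlintegral : ENNReal.ofReal (∫ x, f x + M ∂μ) ≤ ENNReal.ofReal (∫ x, f x + M ∂ν) := by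
    rw [ofReal_integral_eq_lintegral_ofReal (hg_int μ) (ae_of_all _ hf0),
      ofReal_integral_eq_lintegral_ofReal (hg_int ν) (ae_of_all _ hf0)]
    exact lintegral_ofReal_le_of_forall_isUpperSet h (hf.add_const M) hf0 (hmono.add_const M)
  have := (ENNReal.ofReal_le_ofReal_iff (integral_nonneg hf0)).1 hlintegral
  rwa [hshift μ, hshift ν, add_le_add_iff_right] at this

end LayerCake

theorem stochasticallyLE_of_forall_continuous {d : ℕ} {μ ν : Measure (Fin d → ℝ)}
    [IsProbabilityMeasure μ] [IsProbabilityMeasure ν]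
    (h : ∀ g : (Fin d → ℝ) → ℝ, Continuous g → (∃ M : ℝ, ∀ x, |g x| ≤ M) → Monotone g →
      ∫ x, g x ∂μ ≤ ∫ x, g x ∂ν) :
    StochasticallyLE μ ν := fun _ hf hbdd hmono =>
  integral_le_of_forall_isUpperSet
    (fun _ hU hUu => measure_le_of_forall_isClosed_isUpperSet
      (fun _ hF hFu => measure_le_of_forall_continuous_monotone h hF hFu) hU hUu) hf hbdd hmono

theorem stochastic_order_closed_under_weak_convergence_general
    (d : ℕ)
    (μs νs : ℕ → Measure (Fin d → ℝ)) (μ ν : Measure (Fin d → ℝ))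
    [IsProbabilityMeasure μ] [IsProbabilityMeasure ν]
    (hμ_weak : ∀ f : (Fin d → ℝ) → ℝ, Continuous f → (∃ M : ℝ, ∀ x, |f x| ≤ M) →
      Tendsto (fun n => ∫ x, f x ∂(μs n)) atTop (𝓝 (∫ x, f x ∂μ)))
    (hν_weak : ∀ f : (Fin d → ℝ) → ℝ, Continuous f → (∃ M : ℝ, ∀ x, |f x| ≤ M) →
      Tendsto (fun n => ∫ x, f x ∂(νs n)) atTop (𝓝 (∫ x, f x ∂ν)))
    (h_le : ∀ n, StochasticallyLE (μs n) (νs n)) :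
    StochasticallyLE μ ν :=
  stochasticallyLE_of_forall_continuous fun g hg hbdd hmono =>
    le_of_tendsto_of_tendsto' (hμ_weak g hg hbdd) (hν_weak g hg hbdd) fun n =>
      h_le n g hg.measurable hbdd hmono

/-- The stochastic order is closed under weak convergence: if `μ_n → μ` weakly,
`ν_n → ν` weakly and `μ_n ≤ₛₜ ν_n` for every `n`, then `μ ≤ₛₜ ν`. -/
theorem stochastic_order_closed_under_weak_convergence
    (d : ℕ) (hd : 1 ≤ d)
    (μs νs : ℕ → Measure (Fin d → ℝ)) (μ ν : Measure (Fin d → ℝ))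
    [∀ n, IsProbabilityMeasure (μs n)] [∀ n, IsProbabilityMeasure (νs n)]
    [IsProbabilityMeasure μ] [IsProbabilityMeasure ν]
    (hμ_weak : ∀ f : (Fin d → ℝ) → ℝ, Continuous f → (∃ M : ℝ, ∀ x, |f x| ≤ M) →
      Tendsto (fun n => ∫ x, f x ∂(μs n)) atTop (𝓝 (∫ x, f x ∂μ)))
    (hν_weak : ∀ f : (Fin d → ℝ) → ℝ, Continuous f → (∃ M : ℝ, ∀ x, |f x| ≤ M) →
      Tendsto (fun n => ∫ x, f x ∂(νs n)) atTop (𝓝 (∫ x, f x ∂ν)))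
    (h_le : ∀ n, StochasticallyLE (μs n) (νs n)) :
    StochasticallyLE μ ν :=
  stochastic_order_closed_under_weak_convergence_general d μs νs μ ν hμ_weak hν_weak h_le
end

section
/- Let d ≥ 1, p ≥ 1, and let μ₁, μ₂ be Borel probability measures on ℝ^d with ∫ |x|^p dμ₁(x) < ∞ and ∫ |x|^p dμ₂(x) < ∞. Then every Borel probability measure μ on ℝ^d with μ₁ ≤_st μ ≤_st μ₂ satisfies ∫ |x|^p dμ(x) ≤ 2^p ( ∫ |x|^p dμ₁(x) + ∫ |x|^p dμ₂(x) ). In particular, the order interval {μ : μ₁ ≤_st μ ≤_st μ₂} is bounded in p-th moment. -/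
open MeasureTheory

/-- The Euclidean norm on `ℝ^d = Fin d → ℝ`. -/
noncomputable def eucNorm (d : ℕ) (x : Fin d → ℝ) : ℝ :=
  Real.sqrt (∑ i, (x i) ^ 2)

/-!
Split `x = x⁺ - x⁻`. The triangle inequality gives `|x|^p ≤ 2^p (|x⁺|^p + |x⁻|^p)`, and
`x ↦ |x⁺|^p` is increasing while `x ↦ |x⁻|^p` is decreasing. Hence `μ ≤ₛₜ μ₂` bounds the
`μ`-moment of `|x⁺|^p` by its `μ₂`-moment, and `μ₁ ≤ₛₜ μ` that of `|x⁻|^p` by its `μ₁`-moment;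
both are at most the full `p`-th moments. Since the stochastic order only tests bounded functions,
these comparisons go through the truncations `min g n` and monotone convergence.
-/

section Truncation

variable {α : Type*} [MeasurableSpace α] {g : α → ℝ}

lemma ofReal_integral_le_lintegral_ofReal (μ : Measure α) (hg : 0 ≤ g) :
    ENNReal.ofReal (∫ x, g x ∂μ) ≤ ∫⁻ x, ENNReal.ofReal (g x) ∂μ := by
  rw [← Real.enorm_of_nonneg (integral_nonneg hg)]
  refine (enorm_integral_le_lintegral_enorm g).trans_eq (lintegral_congr fun x => ?_)
  exact Real.enorm_of_nonneg (hg x)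

lemma iSup_ofReal_min_natCast (t : ℝ) : ⨆ n : ℕ, ENNReal.ofReal (min t n) = ENNReal.ofReal t :=
  le_antisymm (iSup_le fun _ => ENNReal.ofReal_le_ofReal (min_le_left _ _)) <|
    le_iSup_of_le ⌈t⌉₊ (by rw [min_eq_left (Nat.le_ceil t)])

lemma lintegral_ofReal_eq_iSup_lintegral_ofReal_min (μ : Measure α) (hg : Measurable g) :
    ∫⁻ x, ENNReal.ofReal (g x) ∂μ = ⨆ n : ℕ, ∫⁻ x, ENNReal.ofReal (min (g x) n) ∂μ := by
  simp_rw [← iSup_ofReal_min_natCast (g _)]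
  refine lintegral_iSup (fun n => (hg.min measurable_const).ennreal_ofReal) fun m n hmn x => ?_
  exact ENNReal.ofReal_le_ofReal (min_le_min_left _ (Nat.cast_le.2 hmn))

lemma lintegral_ofReal_le_of_forall_integral_min_le {μ ν : Measure α} [IsFiniteMeasure μ]
    (hg : Measurable g) (hg0 : 0 ≤ g) (h : ∀ n : ℕ, ∫ x, min (g x) n ∂μ ≤ ∫ x, min (g x) n ∂ν) :
    ∫⁻ x, ENNReal.ofReal (g x) ∂μ ≤ ∫⁻ x, ENNReal.ofReal (g x) ∂ν := by
  rw [lintegral_ofReal_eq_iSup_lintegral_ofReal_min μ hg]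
  refine iSup_le fun n => ?_
  have hn0 : 0 ≤ fun x => min (g x) n := fun x => le_min (hg0 x) n.cast_nonneg
  have hint : Integrable (fun x => min (g x) n) μ := by
    refine Integrable.mono' (integrable_const (n : ℝ))
      (hg.min measurable_const).aestronglyMeasurable (Filter.Eventually.of_forall fun x => ?_)
    rw [Real.norm_of_nonneg (hn0 x)]
    exact min_le_right _ _
  calc ∫⁻ x, ENNReal.ofReal (min (g x) n) ∂μ = ENNReal.ofReal (∫ x, min (g x) n ∂μ) :=
        (ofReal_integral_eq_lintegral_ofReal hint (Filter.Eventually.of_forall hn0)).symm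
    _ ≤ ENNReal.ofReal (∫ x, min (g x) n ∂ν) := ENNReal.ofReal_le_ofReal (h n)
    _ ≤ ∫⁻ x, ENNReal.ofReal (min (g x) n) ∂ν := ofReal_integral_le_lintegral_ofReal ν hn0
    _ ≤ ∫⁻ x, ENNReal.ofReal (g x) ∂ν :=
        lintegral_mono fun x => ENNReal.ofReal_le_ofReal (min_le_left _ _)

end Truncation

section PiPosPart

variable {ι : Type*}

@[fun_prop]
lemma measurable_pi_posPart : Measurable (posPart : (ι → ℝ) → ι → ℝ) :=
  measurable_pi_lambda _ fun i => (measurable_pi_apply i).sup measurable_const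

@[fun_prop]
lemma measurable_pi_negPart : Measurable (negPart : (ι → ℝ) → ι → ℝ) :=
  measurable_pi_lambda _ fun i => (measurable_pi_apply i).neg.sup measurable_const

end PiPosPart

section EucNorm

variable {d : ℕ}

lemma eucNorm_eq_norm (x : Fin d → ℝ) : eucNorm d x = ‖WithLp.toLp 2 x‖ := by
  simp [EuclideanSpace.norm_eq, eucNorm]

lemma eucNorm_nonneg (x : Fin d → ℝ) : 0 ≤ eucNorm d x := Real.sqrt_nonneg _

@[fun_prop]
lemma measurable_eucNorm : Measurable (eucNorm d) := by
  unfold eucNorm; fun_prop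

lemma eucNorm_sub_le (x y : Fin d → ℝ) : eucNorm d (x - y) ≤ eucNorm d x + eucNorm d y := by
  simpa only [eucNorm_eq_norm, WithLp.toLp_sub] using norm_sub_le _ _

lemma eucNorm_le_of_abs_le {x y : Fin d → ℝ} (h : ∀ i, |x i| ≤ |y i|) :
    eucNorm d x ≤ eucNorm d y :=
  Real.sqrt_le_sqrt <| Finset.sum_le_sum fun i _ => sq_le_sq.2 (h i)

lemma eucNorm_mono {x y : Fin d → ℝ} (hx : 0 ≤ x) (hxy : x ≤ y) : eucNorm d x ≤ eucNorm d y :=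
  eucNorm_le_of_abs_le fun i => by
    rw [abs_of_nonneg (hx i), abs_of_nonneg ((hx i).trans (hxy i))]; exact hxy i

lemma eucNorm_posPart_le (x : Fin d → ℝ) : eucNorm d x⁺ ≤ eucNorm d x :=
  eucNorm_le_of_abs_le fun i => by
    rw [Pi.posPart_apply, abs_of_nonneg (posPart_nonneg _), ← posPart_add_negPart]
    exact le_add_of_nonneg_right (negPart_nonneg _)

lemma eucNorm_negPart_le (x : Fin d → ℝ) : eucNorm d x⁻ ≤ eucNorm d x :=
  eucNorm_le_of_abs_le fun i => by
    rw [Pi.negPart_apply, abs_of_nonneg (negPart_nonneg _), ← posPart_add_negPart]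
    exact le_add_of_nonneg_left (posPart_nonneg _)

lemma ofReal_eucNorm_rpow_le {p : ℝ} (hp : 0 ≤ p) (x : Fin d → ℝ) :
    ENNReal.ofReal (eucNorm d x ^ p) ≤
      ENNReal.ofReal (2 ^ p) *
        (ENNReal.ofReal (eucNorm d x⁺ ^ p) + ENNReal.ofReal (eucNorm d x⁻ ^ p)) := by
  simp only [← ENNReal.ofReal_rpow_of_nonneg (eucNorm_nonneg _) hp,
    ← ENNReal.ofReal_rpow_of_nonneg zero_le_two hp, ENNReal.ofReal_ofNat]
  calc ENNReal.ofReal (eucNorm d x) ^ p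
      ≤ (ENNReal.ofReal (eucNorm d x⁺) + ENNReal.ofReal (eucNorm d x⁻)) ^ p := by
        gcongr
        rw [← ENNReal.ofReal_add (eucNorm_nonneg _) (eucNorm_nonneg _)]
        refine ENNReal.ofReal_le_ofReal ?_
        simpa only [posPart_sub_negPart] using eucNorm_sub_le x⁺ x⁻
    _ ≤ _ := ENNReal.add_rpow_le_two_rpow_mul_rpow_add_rpow _ _ hp

lemma monotone_eucNorm_posPart_rpow {p : ℝ} (hp : 0 ≤ p) :
    Monotone fun x : Fin d → ℝ => eucNorm d x⁺ ^ p := fun _ _ hxy =>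
  Real.rpow_le_rpow (eucNorm_nonneg _) (eucNorm_mono (posPart_nonneg _) (posPart_mono hxy)) hp

lemma antitone_eucNorm_negPart_rpow {p : ℝ} (hp : 0 ≤ p) :
    Antitone fun x : Fin d → ℝ => eucNorm d x⁻ ^ p := fun _ _ hxy =>
  Real.rpow_le_rpow (eucNorm_nonneg _) (eucNorm_mono (negPart_nonneg _) (negPart_anti hxy)) hp

end EucNorm

namespace StochasticallyLE

variable {d : ℕ} {μ ν : Measure (Fin d → ℝ)} {g : (Fin d → ℝ) → ℝ}

lemma integral_min_natCast_le (h : StochasticallyLE μ ν) (hg : Measurable g) (hg0 : 0 ≤ g)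
    (hmono : Monotone g) (n : ℕ) : ∫ x, min (g x) n ∂μ ≤ ∫ x, min (g x) n ∂ν := by
  refine h _ (hg.min measurable_const) ⟨n, fun x => ?_⟩
    fun x y hxy => min_le_min_right _ (hmono hxy)
  rw [abs_of_nonneg (le_min (hg0 x) n.cast_nonneg)]
  exact min_le_right _ _

lemma integral_min_natCast_le_of_antitone (h : StochasticallyLE ν μ) (hg : Measurable g)
    (hg0 : 0 ≤ g) (hanti : Antitone g) (n : ℕ) : ∫ x, min (g x) n ∂μ ≤ ∫ x, min (g x) n ∂ν := by
  have := h (fun x => -min (g x) n) (hg.min measurable_const).neg ⟨n, fun x => ?_⟩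
    fun x y hxy => neg_le_neg (min_le_min_right _ (hanti hxy))
  · simpa only [integral_neg, neg_le_neg_iff] using this
  · rw [abs_neg, abs_of_nonneg (le_min (hg0 x) n.cast_nonneg)]
    exact min_le_right _ _

lemma lintegral_ofReal_le [IsFiniteMeasure μ] (h : StochasticallyLE μ ν) (hg : Measurable g)
    (hg0 : 0 ≤ g) (hmono : Monotone g) :
    ∫⁻ x, ENNReal.ofReal (g x) ∂μ ≤ ∫⁻ x, ENNReal.ofReal (g x) ∂ν :=
  lintegral_ofReal_le_of_forall_integral_min_le hg hg0 (h.integral_min_natCast_le hg hg0 hmono)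

lemma lintegral_ofReal_le_of_antitone [IsFiniteMeasure μ] (h : StochasticallyLE ν μ)
    (hg : Measurable g) (hg0 : 0 ≤ g) (hanti : Antitone g) :
    ∫⁻ x, ENNReal.ofReal (g x) ∂μ ≤ ∫⁻ x, ENNReal.ofReal (g x) ∂ν :=
  lintegral_ofReal_le_of_forall_integral_min_le hg hg0
    (h.integral_min_natCast_le_of_antitone hg hg0 hanti)

variable [IsFiniteMeasure μ] {p : ℝ}

lemma lintegral_ofReal_eucNorm_posPart_rpow_le (h : StochasticallyLE μ ν) (hp : 0 ≤ p) :
    ∫⁻ x, ENNReal.ofReal (eucNorm d x⁺ ^ p) ∂μ ≤ ∫⁻ x, ENNReal.ofReal (eucNorm d x ^ p) ∂ν :=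
  (h.lintegral_ofReal_le (by fun_prop) (fun _ => Real.rpow_nonneg (eucNorm_nonneg _) p)
    (monotone_eucNorm_posPart_rpow hp)).trans <| lintegral_mono fun x =>
      ENNReal.ofReal_le_ofReal (Real.rpow_le_rpow (eucNorm_nonneg _) (eucNorm_posPart_le x) hp)

lemma lintegral_ofReal_eucNorm_negPart_rpow_le (h : StochasticallyLE ν μ) (hp : 0 ≤ p) :
    ∫⁻ x, ENNReal.ofReal (eucNorm d x⁻ ^ p) ∂μ ≤ ∫⁻ x, ENNReal.ofReal (eucNorm d x ^ p) ∂ν :=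
  (h.lintegral_ofReal_le_of_antitone (by fun_prop)
    (fun _ => Real.rpow_nonneg (eucNorm_nonneg _) p) (antitone_eucNorm_negPart_rpow hp)).trans <| lintegral_mono fun x =>
      ENNReal.ofReal_le_ofReal (Real.rpow_le_rpow (eucNorm_nonneg _) (eucNorm_negPart_le x) hp)

end StochasticallyLE

theorem order_interval_bounded_pth_moment_general
    (d : ℕ) (p : ℝ) (hp : 1 ≤ p)
    (μ₁ μ₂ μ : Measure (Fin d → ℝ))
    [IsProbabilityMeasure μ]
    (hle₁ : StochasticallyLE μ₁ μ) (hle₂ : StochasticallyLE μ μ₂) :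
    ∫⁻ x, ENNReal.ofReal (eucNorm d x ^ p) ∂μ ≤
      ENNReal.ofReal ((2:ℝ) ^ p) *
        (∫⁻ x, ENNReal.ofReal (eucNorm d x ^ p) ∂μ₁ +
         ∫⁻ x, ENNReal.ofReal (eucNorm d x ^ p) ∂μ₂) := by
  have hp0 : 0 ≤ p := zero_le_one.trans hp
  calc ∫⁻ x, ENNReal.ofReal (eucNorm d x ^ p) ∂μ
      ≤ ∫⁻ x, ENNReal.ofReal (2 ^ p) *
          (ENNReal.ofReal (eucNorm d x⁺ ^ p) + ENNReal.ofReal (eucNorm d x⁻ ^ p)) ∂μ :=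
        lintegral_mono (ofReal_eucNorm_rpow_le hp0)
    _ = ENNReal.ofReal (2 ^ p) * (∫⁻ x, ENNReal.ofReal (eucNorm d x⁻ ^ p) ∂μ +
          ∫⁻ x, ENNReal.ofReal (eucNorm d x⁺ ^ p) ∂μ) := by
        rw [lintegral_const_mul' _ _ ENNReal.ofReal_ne_top, lintegral_add_left (by fun_prop),
          add_comm]
    _ ≤ _ := mul_le_mul_right (add_le_add (hle₁.lintegral_ofReal_eucNorm_negPart_rpow_le hp0)
          (hle₂.lintegral_ofReal_eucNorm_posPart_rpow_le hp0)) _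

/-- An order interval of probability measures (w.r.t. the stochastic order) with endpoints
of finite `p`-th moment is bounded in `p`-th moment:
`∫ |x|^p dμ ≤ 2^p (∫ |x|^p dμ₁ + ∫ |x|^p dμ₂)` whenever `μ₁ ≤ₛₜ μ ≤ₛₜ μ₂`. -/
theorem order_interval_bounded_pth_moment
    (d : ℕ) (hd : 1 ≤ d) (p : ℝ) (hp : 1 ≤ p)
    (μ₁ μ₂ μ : Measure (Fin d → ℝ))
    [IsProbabilityMeasure μ₁] [IsProbabilityMeasure μ₂] [IsProbabilityMeasure μ]
    (h₁ : ∫⁻ x, ENNReal.ofReal (eucNorm d x ^ p) ∂μ₁ < ⊤)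
    (h₂ : ∫⁻ x, ENNReal.ofReal (eucNorm d x ^ p) ∂μ₂ < ⊤)
    (hle₁ : StochasticallyLE μ₁ μ) (hle₂ : StochasticallyLE μ μ₂) :
    ∫⁻ x, ENNReal.ofReal (eucNorm d x ^ p) ∂μ ≤
      ENNReal.ofReal ((2:ℝ) ^ p) *
        (∫⁻ x, ENNReal.ofReal (eucNorm d x ^ p) ∂μ₁ +
         ∫⁻ x, ENNReal.ofReal (eucNorm d x ^ p) ∂μ₂) :=
  order_interval_bounded_pth_moment_general d p hp μ₁ μ₂ μ hle₁ hle₂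
end

section
/- For n ∈ ℕ and f : ℝ → ℝ define L_n(f) := Σ_{k=1}^{n} ( f(1/k²) − f(0) ). Then: (i) (Cauchy property) for every ε > 0 there exists N such that for all m ≥ n ≥ N, sup { |L_m(f) − L_n(f)| : f : ℝ → ℝ is 1-Lipschitz and |f(0)| ≤ 1 } ≤ ε; (ii) (no limit with finite mass) there do not exist finite Borel measures ρ⁺, ρ⁻ on ℝ with finite first moments such that sup { |L_n(f) − (∫ f dρ⁺ − ∫ f dρ⁻)| : f is 1-Lipschitz and |f(0)| ≤ 1 } → 0 as n → ∞. Consequently, the space of finite signed Borel measures on ℝ with finite first moments, equipped with the Kantorovich-type norm ‖ρ‖_{W₁} = sup { |∫ f dρ| : |f(0)| ≤ 1, f 1-Lipschitz }, is not complete. -/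
open MeasureTheory Filter Topology

/-- `L n f = ∑_{k=1}^{n} (f (1/k²) − f 0)`, i.e. the pairing of `f` with the signed
measure `ν_n = ∑_{k=1}^n (δ_{1/k²} − δ_0)`. -/
noncomputable def L (n : ℕ) (f : ℝ → ℝ) : ℝ :=
  ∑ k ∈ Finset.Icc 1 n, (f (1 / (k : ℝ) ^ 2) - f 0)

/-!
For a 1-Lipschitz `f`, `|L m f - L n f| ≤ ∑_{n<k≤m} 1/k²`, a tail of a convergent series,
so `(L n)` is Cauchy. There is no limit `ρ⁺ - ρ⁻` because the positive mass of `ν_n` near `0`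
is unbounded, which a ramp `x ↦ clamp x 0 t` detects: at height `t = 1/j²` it gives
`L n ≥ j t = 1/j` for `n ≥ j`, while its pairing with `ρ⁺ - ρ⁻` is at most
`t ρ⁺(ℝ) = ρ⁺(ℝ)/j²`, which is smaller than `1/(2j)` once `j > 2 ρ⁺(ℝ)`.
-/

open Finset

theorem Summable.exists_norm_sum_Ioc_lt {E : Type*} [SeminormedAddCommGroup E] {g : ℕ → E}
    (hg : Summable g) {ε : ℝ} (hε : 0 < ε) : ∃ N, ∀ n m, N ≤ n → ‖∑ k ∈ Ioc n m, g k‖ < ε := by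
  obtain ⟨s, hs⟩ := cauchySeq_finset_iff_vanishing_norm.1 hg.hasSum.cauchySeq ε hε
  obtain ⟨N, hN⟩ := s.exists_nat_subset_range
  refine ⟨N, fun n m hNn => hs _ (disjoint_left.2 fun k hk hks => ?_)⟩
  have := mem_range.1 (hN hks)
  have := (mem_Ioc.1 hk).1
  omega

theorem L_sub_L_eq_sum_Ioc (f : ℝ → ℝ) {m n : ℕ} (hnm : n ≤ m) :
    L m f - L n f = ∑ k ∈ Ioc n m, (f (1 / (k : ℝ) ^ 2) - f 0) := by
  have hIcc : ∀ k : ℕ, Icc 1 k = Ioc 0 k := fun k => Icc_add_one_left_eq_Ioc 0 k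
  simp only [L, hIcc]
  rw [← sum_Ioc_consecutive _ n.zero_le hnm, add_sub_cancel_left]

theorem abs_L_sub_L_le {f : ℝ → ℝ} (hf : LipschitzWith 1 f) {m n : ℕ} (hnm : n ≤ m) :
    |L m f - L n f| ≤ ∑ k ∈ Ioc n m, 1 / (k : ℝ) ^ 2 := by
  rw [L_sub_L_eq_sum_Ioc f hnm]
  refine (abs_sum_le_sum_abs _ _).trans (sum_le_sum fun k _ => ?_)
  have hk := hf.dist_le_mul (1 / (k : ℝ) ^ 2) 0
  rwa [Real.dist_eq, Real.dist_eq, NNReal.coe_one, one_mul, sub_zero,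
    abs_of_nonneg (a := 1 / (k : ℝ) ^ 2) (by positivity)] at hk

def ramp (t x : ℝ) : ℝ := max 0 (min x t)

section ramp
variable {t : ℝ}

theorem lipschitzWith_ramp (t : ℝ) : LipschitzWith 1 (ramp t) :=
  (LipschitzWith.id.min_const t).const_max 0

theorem ramp_nonneg (t x : ℝ) : 0 ≤ ramp t x := le_max_left _ _

theorem ramp_le (ht : 0 ≤ t) (x : ℝ) : ramp t x ≤ t := max_le ht (min_le_right _ _)

theorem ramp_of_le (ht : 0 ≤ t) {x : ℝ} (hx : t ≤ x) : ramp t x = t := by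
  rw [ramp, min_eq_right hx, max_eq_right ht]

theorem ramp_zero (ht : 0 ≤ t) : ramp t 0 = 0 := by
  rw [ramp, min_eq_left ht, max_self]

theorem mul_le_L_ramp (ht : 0 ≤ t) {j n : ℕ} (htj : t ≤ 1 / (j : ℝ) ^ 2) (hjn : j ≤ n) :
    j * t ≤ L n (ramp t) := by
  have hramp : ∀ k ∈ Icc 1 j, ramp t (1 / (k : ℝ) ^ 2) = t := fun k hk => by
    obtain ⟨hk1, hkj⟩ := mem_Icc.1 hk
    refine ramp_of_le ht (htj.trans (one_div_le_one_div_of_le (by positivity) ?_))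
    gcongr
  calc (j : ℝ) * t = ∑ k ∈ Icc 1 j, ramp t (1 / (k : ℝ) ^ 2) := by
        rw [sum_congr rfl hramp]; simp
    _ ≤ ∑ k ∈ Icc 1 n, ramp t (1 / (k : ℝ) ^ 2) :=
        sum_le_sum_of_subset_of_nonneg (Icc_subset_Icc_right hjn) fun _ _ _ => ramp_nonneg _ _
    _ = L n (ramp t) := by simp [L, ramp_zero ht]

theorem integral_ramp_sub_integral_ramp_le (ρp ρm : Measure ℝ) [IsFiniteMeasure ρp] (ht : 0 ≤ t) :
    ∫ x, ramp t x ∂ρp - ∫ x, ramp t x ∂ρm ≤ t * ρp.real Set.univ := by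
  have hp : ∫ x, ramp t x ∂ρp ≤ ∫ _, t ∂ρp :=
    integral_mono_of_nonneg (ae_of_all _ (ramp_nonneg t)) (integrable_const t)
      (ae_of_all _ (ramp_le ht))
  have hm : 0 ≤ ∫ x, ramp t x ∂ρm := integral_nonneg (ramp_nonneg t)
  rw [integral_const, smul_eq_mul, mul_comm] at hp
  linarith

end ramp

/-- The space of finite signed Borel measures on `ℝ` with finite first moments, with the
Kantorovich-type norm `‖ρ‖_{W₁} = sup {|∫ f dρ| : |f 0| ≤ 1, f 1-Lipschitz}`, is not
complete: the sequence `ν_n = ∑_{k=1}^n (δ_{1/k²} − δ_0)` is Cauchy for this norm but has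
no limit given by a difference of finite Borel measures with finite first moments. -/
theorem kantorovich_space_not_complete :
    -- (i) Cauchy property:
    (∀ ε > (0:ℝ), ∃ N : ℕ, ∀ m n : ℕ, N ≤ n → n ≤ m →
      ∀ f : ℝ → ℝ, LipschitzWith 1 f → |f 0| ≤ 1 → |L m f - L n f| ≤ ε) ∧
    -- (ii) no limit with finite mass and finite first moment:
    ¬ ∃ ρp ρm : Measure ℝ, IsFiniteMeasure ρp ∧ IsFiniteMeasure ρm ∧
      Integrable (fun x => |x|) ρp ∧ Integrable (fun x => |x|) ρm ∧
      ∀ ε > (0:ℝ), ∃ N : ℕ, ∀ n : ℕ, N ≤ n →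
        ∀ f : ℝ → ℝ, LipschitzWith 1 f → |f 0| ≤ 1 →
          |L n f - (∫ x, f x ∂ρp - ∫ x, f x ∂ρm)| ≤ ε := by
  refine ⟨fun ε hε => ?_, ?_⟩
  · obtain ⟨N, hN⟩ := (Real.summable_one_div_nat_pow.2 one_lt_two).exists_norm_sum_Ioc_lt hε
    refine ⟨N, fun m n hNn hnm f hf _ => (abs_L_sub_L_le hf hnm).trans ?_⟩
    exact (le_abs_self _).trans (hN n m hNn).le
  · rintro ⟨ρp, ρm, hρp, -, -, -, hconv⟩
    obtain ⟨j, hj⟩ := exists_nat_gt (2 * ρp.real Set.univ)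
    have hj0 : (0 : ℝ) < j := lt_of_le_of_lt (by positivity) hj
    set t : ℝ := 1 / (j : ℝ) ^ 2
    have ht : 0 < t := by positivity
    obtain ⟨N, hN⟩ := hconv (j * t / 2) (by positivity)
    have hdev := hN (max N j) (le_max_left N j) (ramp t) (lipschitzWith_ramp t)
      (by simp [ramp_zero ht.le])
    have hL := mul_le_L_ramp ht.le le_rfl (le_max_right N j)
    have hI := integral_ramp_sub_integral_ramp_le ρp ρm ht.le
    have : j * t ≤ 2 * ρp.real Set.univ * t := by linarith [(abs_le.1 hdev).2]
    exact hj.not_ge (le_of_mul_le_mul_right this ht)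
end

section
/- Let d ≥ 1 and let μ, ν be Borel probability measures on ℝ^d with finite first moments, i.e., ∫ |x| dμ(x) < ∞ and ∫ |x| dν(x) < ∞. Then μ ≤_st ν if and only if ∫ f dμ ≤ ∫ f dν for every nonnegative 1-Lipschitz increasing function f : ℝ^d → ℝ. -/
/-!
Both conditions are equivalent to `μ U ≤ ν U` for every Borel upper set `U`.
For a nonnegative increasing `f`, the layer-cake formula `∫ f = ∫₀^∞ P(f > t) dt` expresses the
integral through the upper sets `{f > t}`; this covers bounded increasing functions (after a
shift) and the Lipschitz test functions, which the first moment of `ν` makes `ν`-integrable.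
Conversely, for a closed upper set `S` the thickened indicators `(1 - dist(·, S) / δ)⁺` are
increasing and Lipschitz and converge to the indicator of `S` as `δ → 0`; inner regularity by
compact sets `K`, whose upper closures `K + ℝ^d₊` are closed, passes from closed to Borel upper
sets.
-/

open MeasureTheory NNReal Pointwise

lemma IsUpperSet.antitone_infEDist_s12 {E : Type*} [SeminormedAddCommGroup E] [PartialOrder E]
    [IsOrderedAddMonoid E] {S : Set E} (hS : IsUpperSet S) :
    Antitone (Metric.infEDist · S) := by
  intro x y hxy
  refine Metric.le_infEDist.2 fun s hs => ?_
  calc Metric.infEDist y S ≤ edist y (s + (y - x)) :=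
        Metric.infEDist_le_edist_of_mem (hS (le_add_of_nonneg_right (sub_nonneg.2 hxy)) hs)
    _ = edist x s := by
        rw [edist_eq_enorm_sub, edist_eq_enorm_sub]
        congr 1
        abel

lemma integral_le_integral_of_lipschitzWith {E : Type*} [PseudoMetricSpace E] [Preorder E]
    [MeasurableSpace E] {μ ν : Measure E}
    (h : ∀ f : E → ℝ, (∀ x, 0 ≤ f x) → LipschitzWith 1 f → Monotone f →
      ∫ x, f x ∂μ ≤ ∫ x, f x ∂ν)
    {K : ℝ≥0} {f : E → ℝ} (hf₀ : ∀ x, 0 ≤ f x) (hfK : LipschitzWith K f) (hf : Monotone f) :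
    ∫ x, f x ∂μ ≤ ∫ x, f x ∂ν := by
  set c : ℝ := K + 1
  have hc : 0 < c := by positivity
  have hlip : LipschitzWith 1 fun x => c⁻¹ * f x := LipschitzWith.of_dist_le_mul fun x y => by
    rw [Real.dist_eq, ← mul_sub, abs_mul, abs_of_pos (inv_pos.2 hc), NNReal.coe_one, one_mul,
      inv_mul_le_iff₀ hc, ← Real.dist_eq]
    exact (hfK.dist_le_mul x y).trans (by gcongr; linarith)
  have := h _ (fun x => mul_nonneg (inv_nonneg.2 hc.le) (hf₀ x)) hlip
    fun x y hxy => mul_le_mul_of_nonneg_left (hf hxy) (inv_nonneg.2 hc.le)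
  rwa [integral_const_mul, integral_const_mul, mul_le_mul_iff_right₀ (inv_pos.2 hc)] at this

lemma measure_le_of_isClosed_of_isUpperSet {E : Type*} [NormedAddCommGroup E] [PartialOrder E]
    [IsOrderedAddMonoid E] [MeasurableSpace E] [OpensMeasurableSpace E]
    {μ ν : Measure E} [IsFiniteMeasure μ] [IsFiniteMeasure ν]
    (h : ∀ f : E → ℝ, (∀ x, 0 ≤ f x) → LipschitzWith 1 f → Monotone f →
      ∫ x, f x ∂μ ≤ ∫ x, f x ∂ν)
    {S : Set E} (hS : IsClosed S) (hS' : IsUpperSet S) : μ S ≤ ν S := by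
  have hδ : ∀ n : ℕ, (0 : ℝ) < 1 / (n + 1) := fun n => Nat.one_div_pos_of_nat
  have hle : ∀ n, ∫ x, (thickenedIndicator (hδ n) S x : ℝ) ∂μ ≤
      ∫ x, (thickenedIndicator (hδ n) S x : ℝ) ∂ν := fun n =>
    integral_le_integral_of_lipschitzWith h (fun x => NNReal.coe_nonneg _)
      ((LipschitzWith.subtype_val _).comp (lipschitzWith_thickenedIndicator (hδ n) S))
      (NNReal.coe_mono.comp fun x y hxy => thickenedIndicator_mono_infEDist _
        (hS'.antitone_infEDist_s12 hxy))
  have hlim := tendsto_one_div_add_atTop_nhds_zero_nat (𝕜 := ℝ)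
  have := le_of_tendsto_of_tendsto' (tendsto_integral_thickenedIndicator_of_isClosed μ hS hδ hlim)
    (tendsto_integral_thickenedIndicator_of_isClosed ν hS hδ hlim) hle
  exact (ENNReal.toReal_le_toReal (measure_ne_top μ S) (measure_ne_top ν S)).1 this

lemma measure_le_of_isUpperSet {E : Type*} [TopologicalSpace E] [AddCommGroup E] [PartialOrder E]
    [IsOrderedAddMonoid E] [IsTopologicalAddGroup E] [ClosedIciTopology E] [MeasurableSpace E]
    {μ ν : Measure E} [IsFiniteMeasure μ] [μ.InnerRegularCompactLTTop]
    (h : ∀ S : Set E, IsClosed S → IsUpperSet S → μ S ≤ ν S)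
    {U : Set E} (hU : MeasurableSet U) (hU' : IsUpperSet U) : μ U ≤ ν U := by
  refine ENNReal.le_of_forall_pos_le_add fun ε hε _ => ?_
  obtain ⟨K, hKU, hK, hμK⟩ :=
    hU.exists_isCompact_lt_add (measure_ne_top μ U) (ENNReal.coe_ne_zero.2 hε.ne')
  -- `K + Ici 0` is the upper closure of `K`; it is closed because `K` is compact.
  have hKS : K ⊆ K + Set.Ici (0 : E) := Set.subset_add_left K le_rfl
  have hSU : K + Set.Ici (0 : E) ⊆ U := by
    rintro _ ⟨a, ha, b, hb, rfl⟩
    exact hU' (le_add_of_nonneg_right hb) (hKU ha)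
  calc μ U ≤ μ K + ε := hμK.le
    _ ≤ μ (K + Set.Ici (0 : E)) + ε := by gcongr
    _ ≤ ν (K + Set.Ici 0) + ε := by
        rel [h _ (isClosed_Ici.add_left_of_isCompact hK) (isUpperSet_Ici 0).add_left]
    _ ≤ ν U + ε := by gcongr

section LayerCake

variable {α : Type*} [MeasurableSpace α] [Preorder α] {μ ν : Measure α}

lemma lintegral_le_lintegral_of_monotone
    (h : ∀ U : Set α, MeasurableSet U → IsUpperSet U → μ U ≤ ν U)
    {f : α → ℝ} (hf₀ : ∀ x, 0 ≤ f x) (hfm : Measurable f) (hf : Monotone f) :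
    ∫⁻ x, ENNReal.ofReal (f x) ∂μ ≤ ∫⁻ x, ENNReal.ofReal (f x) ∂ν := by
  rw [lintegral_eq_lintegral_meas_lt μ (ae_of_all _ hf₀) hfm.aemeasurable,
    lintegral_eq_lintegral_meas_lt ν (ae_of_all _ hf₀) hfm.aemeasurable]
  exact lintegral_mono fun t =>
    h _ (measurableSet_lt measurable_const hfm) fun _ _ hxy hx => hx.trans_le (hf hxy)

lemma integral_le_integral_of_monotone
    (h : ∀ U : Set α, MeasurableSet U → IsUpperSet U → μ U ≤ ν U)
    {f : α → ℝ} (hf₀ : ∀ x, 0 ≤ f x) (hfm : Measurable f) (hf : Monotone f)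
    (hfν : Integrable f ν) : ∫ x, f x ∂μ ≤ ∫ x, f x ∂ν := by
  rw [integral_eq_lintegral_of_nonneg_ae (ae_of_all _ hf₀) hfm.aestronglyMeasurable,
    integral_eq_lintegral_of_nonneg_ae (ae_of_all _ hf₀) hfm.aestronglyMeasurable]
  exact ENNReal.toReal_mono hfν.lintegral_lt_top.ne
    (lintegral_le_lintegral_of_monotone h hf₀ hfm hf)

end LayerCake

lemma eucNorm_eq_norm_toLp {d : ℕ} (x : Fin d → ℝ) :
    eucNorm d x = ‖(WithLp.toLp 2 x : EuclideanSpace ℝ (Fin d))‖ := by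
  simp [eucNorm, EuclideanSpace.norm_eq]

lemma dist_le_eucNorm_sub {d : ℕ} (x y : Fin d → ℝ) : dist x y ≤ eucNorm d (x - y) := by
  rw [eucNorm_eq_norm_toLp, WithLp.toLp_sub, ← dist_eq_norm]
  simpa using (PiLp.lipschitzWith_ofLp 2 fun _ : Fin d => ℝ).dist_le_mul
    (WithLp.toLp 2 x) (WithLp.toLp 2 y)

lemma continuous_of_abs_sub_le_eucNorm {d : ℕ} {f : (Fin d → ℝ) → ℝ}
    (hf : ∀ x y, |f x - f y| ≤ eucNorm d (x - y)) : Continuous f := by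
  have hlip : LipschitzWith 1 (f ∘ WithLp.ofLp : EuclideanSpace ℝ (Fin d) → ℝ) :=
    LipschitzWith.of_dist_le_mul fun x y => by
      simpa [Real.dist_eq, eucNorm_eq_norm_toLp, dist_eq_norm] using hf x.ofLp y.ofLp
  exact hlip.continuous.comp (PiLp.continuous_toLp 2 _)

lemma integrable_of_abs_sub_le_eucNorm {d : ℕ} {μ : Measure (Fin d → ℝ)} [IsFiniteMeasure μ]
    (hμ : Integrable (fun x => eucNorm d x) μ) {f : (Fin d → ℝ) → ℝ}
    (hf : ∀ x y, |f x - f y| ≤ eucNorm d (x - y)) : Integrable f μ := by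
  refine ((integrable_const |f 0|).add hμ).mono'
    (continuous_of_abs_sub_le_eucNorm hf).aestronglyMeasurable (ae_of_all _ fun x => ?_)
  have := hf x 0
  rw [sub_zero] at this
  rw [Real.norm_eq_abs, Pi.add_apply]
  linarith [abs_sub_abs_le_abs_sub (f x) (f 0)]

lemma stochasticallyLE_iff_measure_le {d : ℕ} {μ ν : Measure (Fin d → ℝ)}
    [IsProbabilityMeasure μ] [IsProbabilityMeasure ν] :
    StochasticallyLE μ ν ↔ ∀ U, MeasurableSet U → IsUpperSet U → μ U ≤ ν U := by
  constructor
  · intro h U hU hU'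
    have hmono : Monotone (U.indicator 1 : (Fin d → ℝ) → ℝ) := fun x y hxy => by
      by_cases hx : x ∈ U
      · rw [Set.indicator_of_mem hx, Set.indicator_of_mem (hU' hxy hx)]
        exact le_rfl
      · rw [Set.indicator_of_notMem hx]
        exact Set.indicator_nonneg (fun _ _ => zero_le_one) y
    have := h _ (measurable_one.indicator hU) ⟨1, fun x => by
      by_cases hx : x ∈ U <;> simp [hx]⟩ hmono
    rw [integral_indicator_one hU, integral_indicator_one hU] at this
    exact (ENNReal.toReal_le_toReal (measure_ne_top μ U) (measure_ne_top ν U)).1 this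
  · rintro h g hgm ⟨M, hM⟩ hg
    have hgi : ∀ (κ : Measure (Fin d → ℝ)) [IsFiniteMeasure κ], Integrable g κ := fun κ _ =>
      .of_bound hgm.aestronglyMeasurable M (ae_of_all _ hM)
    have key := integral_le_integral_of_monotone h (f := fun x => g x + M)
      (fun x => by linarith [neg_abs_le (g x), hM x]) (hgm.add_const M)
      (fun x y hxy => add_le_add_left (hg hxy) M) ((hgi ν).add (integrable_const M))
    rw [integral_add (hgi μ) (integrable_const M), integral_add (hgi ν) (integrable_const M),
      integral_const, integral_const] at key
    simpa using key

theorem stochastic_order_iff_lipschitz_test_general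
    (d : ℕ)
    (μ ν : Measure (Fin d → ℝ)) [IsProbabilityMeasure μ] [IsProbabilityMeasure ν]
    (hν_mom : Integrable (fun x => eucNorm d x) ν) :
    StochasticallyLE μ ν ↔
      ∀ f : (Fin d → ℝ) → ℝ, (∀ x, 0 ≤ f x) →
        (∀ x y, |f x - f y| ≤ eucNorm d (x - y)) → Monotone f →
        ∫ x, f x ∂μ ≤ ∫ x, f x ∂ν := by
  rw [stochasticallyLE_iff_measure_le]
  constructor
  · intro h f hf₀ hf hf_mono
    exact integral_le_integral_of_monotone h hf₀ (continuous_of_abs_sub_le_eucNorm hf).measurable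
      hf_mono (integrable_of_abs_sub_le_eucNorm hν_mom hf)
  · intro h
    have hLip : ∀ f : (Fin d → ℝ) → ℝ, (∀ x, 0 ≤ f x) → LipschitzWith 1 f → Monotone f →
        ∫ x, f x ∂μ ≤ ∫ x, f x ∂ν := fun f hf₀ hf hf_mono =>
      h f hf₀ (fun x y => (hf.dist_le_mul x y).trans_eq (one_mul _) |>.trans
        (dist_le_eucNorm_sub x y)) hf_mono
    exact fun U hU hU' => measure_le_of_isUpperSet
      (fun S hS hS' => measure_le_of_isClosed_of_isUpperSet hLip hS hS') hU hU'

/-- For probability measures with finite first moments, the stochastic order can be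
tested on nonnegative `1`-Lipschitz increasing functions. -/
theorem stochastic_order_iff_lipschitz_test
    (d : ℕ) (hd : 1 ≤ d)
    (μ ν : Measure (Fin d → ℝ)) [IsProbabilityMeasure μ] [IsProbabilityMeasure ν]
    (hμ_mom : Integrable (fun x => eucNorm d x) μ)
    (hν_mom : Integrable (fun x => eucNorm d x) ν) :
    StochasticallyLE μ ν ↔
      ∀ f : (Fin d → ℝ) → ℝ, (∀ x, 0 ≤ f x) →
        (∀ x y, |f x - f y| ≤ eucNorm d (x - y)) → Monotone f →
        ∫ x, f x ∂μ ≤ ∫ x, f x ∂ν :=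
  stochastic_order_iff_lipschitz_test_general d μ ν hν_mom
end

section
/- Fix β > 0, w > 0, and c ∈ ℝ, and define g : [0,∞) → ℝ by g(z) = 2z² − 6z^{3/2} + (4 + 2β)z − 2β w^{1/2} z^{1/2} − c. Then g is convex on [0,∞) if and only if β ≥ 27 / (16 w^{1/2}). (Equivalently, the second derivative 4 − (9/2) z^{−1/2} + (β w^{1/2} / 2) z^{−3/2} is nonnegative for all z > 0 if and only if β ≥ 27/(16 √w).) -/
/-!
On `(0, ∞)` the function is twice differentiable and it is continuous at `0`, so it is convex on
`[0, ∞)` exactly when its second derivative is nonnegative on `(0, ∞)`. Substituting `z = u²`,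
`2u³ g''(u²) = 8u³ - 9u² + β√w = (u - 3/4)² (8u + 3) + (β√w - 27/16)`, whose minimum over `u > 0`,
attained at `u = 3/4`, is `β√w - 27/16`.
-/

open Set

theorem convexOn_iff_hasDerivAt2_nonneg {D : Set ℝ} (hD : Convex ℝ D) {f f' f'' : ℝ → ℝ}
    (hf : ContinuousOn f D) (hf' : ∀ x ∈ interior D, HasDerivAt f (f' x) x)
    (hf'' : ∀ x ∈ interior D, HasDerivAt f' (f'' x) x) :
    ConvexOn ℝ D f ↔ ∀ x ∈ interior D, 0 ≤ f'' x := by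
  refine ⟨fun hconv x hx => ?_, convexOn_of_hasDerivWithinAt2_nonneg hD hf
    (fun x hx => (hf' x hx).hasDerivWithinAt) (fun x hx => (hf'' x hx).hasDerivWithinAt)⟩
  have hmono : MonotoneOn f' (interior D) :=
    ((hconv.subset interior_subset hD.interior).monotoneOn_deriv
      fun y hy => (hf' y hy).differentiableAt).congr fun y hy => (hf' y hy).deriv
  have hacc : AccPt x (Filter.principal (interior D)) := by
    simpa using (PerfectSpace.univ_preperfect.open_inter isOpen_interior) x ⟨hx, mem_univ x⟩
  exact (hf'' x hx).hasDerivWithinAt.nonneg_of_monotoneOn hacc hmono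

theorem Real.rpow_three_halves_eq_mul_sqrt {z : ℝ} (hz : 0 ≤ z) : z ^ ((3:ℝ)/2) = z * √z := by
  rw [show ((3:ℝ)/2) = 1 + 1/2 by norm_num, Real.rpow_add' hz (by norm_num), Real.rpow_one,
    Real.sqrt_eq_rpow]

namespace ConvexityCriterion

variable (β s c : ℝ)

noncomputable def g (z : ℝ) : ℝ :=
  2 * z ^ 2 - 6 * (z * √z) + (4 + 2 * β) * z - 2 * β * s * √z - c

noncomputable def g' (z : ℝ) : ℝ :=
  4 * z - 9 * √z + (4 + 2 * β) - β * s / √z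

noncomputable def g'' (z : ℝ) : ℝ :=
  4 - 9 / (2 * √z) + β * s / (2 * z * √z)

variable {β s c}

theorem hasDerivAt_g {z : ℝ} (hz : 0 < z) : HasDerivAt (g β s c) (g' β s z) z := by
  have hsqrt := Real.hasDerivAt_sqrt hz.ne'
  have h := (((((hasDerivAt_pow 2 z).const_mul 2).sub
    (((hasDerivAt_id z).mul hsqrt).const_mul 6)).add ((hasDerivAt_id z).const_mul (4 + 2 * β))).sub
    (hsqrt.const_mul (2 * β * s))).sub_const c
  refine h.congr_deriv ?_
  obtain ⟨u, hu, rfl⟩ : ∃ u, 0 < u ∧ z = u ^ 2 := ⟨√z, Real.sqrt_pos.2 hz, (Real.sq_sqrt hz.le).symm⟩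
  simp only [g', Real.sqrt_sq hu.le, id]
  field_simp
  ring

theorem hasDerivAt_g' {z : ℝ} (hz : 0 < z) : HasDerivAt (g' β s) (g'' β s z) z := by
  have hsqrt := Real.hasDerivAt_sqrt hz.ne'
  have h := ((((hasDerivAt_id z).const_mul 4).sub (hsqrt.const_mul 9)).add_const (4 + 2 * β)).sub
    ((hasDerivAt_const z (β * s)).div hsqrt (Real.sqrt_pos.2 hz).ne')
  refine h.congr_deriv ?_
  obtain ⟨u, hu, rfl⟩ : ∃ u, 0 < u ∧ z = u ^ 2 := ⟨√z, Real.sqrt_pos.2 hz, (Real.sq_sqrt hz.le).symm⟩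
  simp only [g'', Real.sqrt_sq hu.le]
  field_simp
  ring

theorem g''_sq {u : ℝ} (hu : 0 < u) :
    g'' β s (u ^ 2) = ((u - 3/4) ^ 2 * (8 * u + 3) + (β * s - 27/16)) / (2 * u ^ 3) := by
  rw [g'', Real.sqrt_sq hu.le]
  field_simp
  ring

theorem g''_nonneg_iff : (∀ z ∈ Ioi (0:ℝ), 0 ≤ g'' β s z) ↔ 27/16 ≤ β * s := by
  refine ⟨fun h => ?_, fun h z hz => ?_⟩
  · have h₀ := h ((3/4) ^ 2) (by norm_num)
    rw [g''_sq (by norm_num)] at h₀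
    norm_num at h₀
    linarith
  · have hu := Real.sqrt_pos.2 hz
    rw [← Real.sq_sqrt hz.le, g''_sq hu]
    positivity

end ConvexityCriterion

open ConvexityCriterion in
theorem convexity_criterion_general (β w c : ℝ) (hw : 0 < w) :
    ConvexOn ℝ (Set.Ici (0:ℝ))
        (fun z : ℝ => 2 * z ^ 2 - 6 * z ^ ((3:ℝ)/2) + (4 + 2 * β) * z
          - 2 * β * Real.sqrt w * Real.sqrt z - c) ↔
      27 / (16 * Real.sqrt w) ≤ β := by
  have hg : EqOn (fun z : ℝ => 2 * z ^ 2 - 6 * z ^ ((3:ℝ)/2) + (4 + 2 * β) * z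
      - 2 * β * √w * √z - c) (g β √w c) (Ici 0) := fun z hz => by
    simp only [g, Real.rpow_three_halves_eq_mul_sqrt (mem_Ici.1 hz)]
  refine (Iff.intro (fun h => h.congr hg) (fun h => h.congr hg.symm)).trans ?_
  rw [convexOn_iff_hasDerivAt2_nonneg (convex_Ici 0) (by unfold g; fun_prop)
    (fun z hz => hasDerivAt_g (interior_Ici.subset hz))
    (fun z hz => hasDerivAt_g' (interior_Ici.subset hz)), interior_Ici, g''_nonneg_iff,
    div_le_iff₀ (by positivity : (0:ℝ) < 16 * √w)]
  constructor <;> intro h <;> linarith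

/-- The function `g(z) = 2z² − 6z^{3/2} + (4 + 2β)z − 2β√w √z − c` is convex on `[0,∞)`
if and only if `β ≥ 27/(16√w)`. -/
theorem convexity_criterion (β w c : ℝ) (hβ : 0 < β) (hw : 0 < w) :
    ConvexOn ℝ (Set.Ici (0:ℝ))
        (fun z : ℝ => 2 * z ^ 2 - 6 * z ^ ((3:ℝ)/2) + (4 + 2 * β) * z
          - 2 * β * Real.sqrt w * Real.sqrt z - c) ↔
      27 / (16 * Real.sqrt w) ≤ β :=
  convexity_criterion_general β w c hw
end
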